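/- Let λ₁, …, λₙ be positive real numbers. Then (λ₁⋯λₙ)^(1/n) ≤ (1/n)·∑ᵢ λᵢ ≤ (λ₁⋯λₙ)·(∑ᵢ 1/λᵢ)^(n-1). -/

import Mathlib

/-!
The first inequality is AM–GM. For the second, λᵢ = (∏ⱼ λⱼ) · ∏_{j ≠ i} λⱼ⁻¹ and each of
these n - 1 factors λⱼ⁻¹ is at most ∑ₖ λₖ⁻¹, so every λᵢ, hence also their mean, is at most
(∏ⱼ λⱼ) (∑ₖ λₖ⁻¹)ⁿ⁻¹.
-/

open Finset

theorem Real.prod_rpow_inv_card_le_sum_div_card {ι : Type*} {s : Finset ι} (hs : s.Nonempty)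
    {z : ι → ℝ} (hz : ∀ i ∈ s, 0 ≤ z i) :
    (∏ i ∈ s, z i) ^ (#s : ℝ)⁻¹ ≤ (∑ i ∈ s, z i) / #s := by
  simpa using Real.geom_mean_le_arith_mean s 1 z (fun _ _ ↦ zero_le_one) (by simpa) hz

theorem Finset.prod_le_sum_pow_card {ι R : Type*} [CommSemiring R] [PartialOrder R]
    [IsOrderedRing R] {s t : Finset ι} {f : ι → R} (hts : t ⊆ s) (hf : ∀ i ∈ s, 0 ≤ f i) :
    ∏ i ∈ t, f i ≤ (∑ i ∈ s, f i) ^ #t := by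
  rw [← prod_const]
  exact prod_le_prod (fun i hi ↦ hf i (hts hi)) fun i hi ↦ single_le_sum hf (hts hi)

theorem le_prod_mul_sum_inv_pow_card_sub_one {ι K : Type*} [Fintype ι] [Field K] [LinearOrder K]
    [IsStrictOrderedRing K] {f : ι → K} (hf : ∀ i, 0 < f i) (i : ι) :
    f i ≤ (∏ j, f j) * (∑ j, (f j)⁻¹) ^ (Fintype.card ι - 1) := by
  classical
  have hprod : (∏ j, f j) * ∏ j ∈ univ.erase i, (f j)⁻¹ = f i := by
    rw [← mul_prod_erase univ f (mem_univ i), mul_assoc, ← prod_mul_distrib,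
      prod_congr rfl fun j _ ↦ mul_inv_cancel₀ (hf j).ne', prod_const_one, mul_one]
  calc f i = (∏ j, f j) * ∏ j ∈ univ.erase i, (f j)⁻¹ := hprod.symm
    _ ≤ (∏ j, f j) * (∑ j, (f j)⁻¹) ^ (Fintype.card ι - 1) := by
      rw [← card_univ, ← card_erase_of_mem (mem_univ i)]
      gcongr
      · exact (prod_pos fun j _ ↦ hf j).le
      · exact prod_le_sum_pow_card (subset_univ _) fun j _ ↦ (inv_pos.mpr (hf j)).le

/-- AM-GM type eigenvalue inequality: for positive reals λ₁,…,λₙ,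
(λ₁⋯λₙ)^(1/n) ≤ (1/n)∑λᵢ ≤ (λ₁⋯λₙ)(∑ 1/λᵢ)^(n-1). -/
theorem eigenvalue_trace_det_inequality (n : ℕ) (hn : 1 ≤ n) (lam : Fin n → ℝ)
    (hpos : ∀ i, 0 < lam i) :
    (∏ i, lam i) ^ ((1 : ℝ) / n) ≤ (1 / n : ℝ) * ∑ i, lam i ∧
    (1 / n : ℝ) * ∑ i, lam i ≤ (∏ i, lam i) * (∑ i, (lam i)⁻¹) ^ (n - 1) := by
  have huniv : (univ : Finset (Fin n)).Nonempty := univ_nonempty_iff.mpr ⟨⟨0, hn⟩⟩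
  constructor
  · simpa [inv_mul_eq_div] using
      Real.prod_rpow_inv_card_le_sum_div_card huniv fun i _ ↦ (hpos i).le
  · have hle := le_prod_mul_sum_inv_pow_card_sub_one hpos
    rw [Fintype.card_fin] at hle
    rw [one_div_mul_eq_div, div_le_iff₀' (by exact_mod_cast hn)]
    simpa using sum_le_card_nsmul univ lam _ fun i _ ↦ hle i
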